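/- Every 2×2 unitary matrix whose four entries lie in the ring Z[1/√2, i] has the form [[z, −w*ω^k],[w, z*ω^k]] for some z, w ∈ Z[1/√2, i] with |z|²+|w|²=1 and some integer k, where ω = e^{2πi/8}; in particular its determinant is a power of ω. -/

import Mathlib

noncomputable section

open Complex

/-- The eighth root of unity ω = e^{iπ/4}. -/
def omg : ℂ := Complex.exp (Real.pi * Complex.I / 4)

/-- √2 as a complex number. -/
def rt2 : ℂ := (Real.sqrt 2 : ℝ)

/-- Membership in the ring Z[ω] = {a + bω + cω² + dω³ : a,b,c,d ∈ ℤ}. -/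
def Zomega (z : ℂ) : Prop :=
  ∃ a b c d : ℤ, z = a + b * omg + c * omg ^ 2 + d * omg ^ 3

/-- Membership in the ring Z[1/√2, i] = {u/(√2)^n : u ∈ Z[ω], n ∈ ℕ}. -/
def ZRoot2i (z : ℂ) : Prop :=
  ∃ u : ℂ, Zomega u ∧ ∃ n : ℕ, z = u / rt2 ^ n

/-- `b` divides `z` within the ring Z[ω]. -/
def ZDvd (b z : ℂ) : Prop := ∃ q : ℂ, Zomega q ∧ z = b * q

/-- `k` is the greatest dividing exponent of base `b` with respect to `z`:
`b^k` divides `z` in Z[ω], while `b^(k+1)` does not. -/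
def IsGde (b z : ℂ) (k : ℕ) : Prop := ZDvd (b ^ k) z ∧ ¬ ZDvd (b ^ (k + 1)) z

/-- `k` is the smallest denominator exponent of base √2 with respect to `z`:
the smallest integer `k` such that `z·(√2)^k ∈ Z[ω]`. -/
def IsSde (z : ℂ) (k : ℤ) : Prop :=
  Zomega (z * rt2 ^ k) ∧ ∀ j : ℤ, Zomega (z * rt2 ^ j) → k ≤ j

/-! Since U is unitary, adj U = det U · U*, which gives the shape of U once det U is known to be
a power of ω; and det U is a modulus-one element of Z[1/√2, i]. Write such an element as u/√2ⁿ
with u = a + bω + cω² + dω³, so |u|² = 2ⁿ. As |u|² = (a² + b² + c² + d²) + (ab + bc + cd − da)√2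
and √2 is irrational, a² + b² + c² + d² = 2ⁿ and ab + bc + cd − da = 0. For n > 0 this forces
a ≡ c and b ≡ d mod 2, which means exactly that √2 = ω − ω³ divides u in Z[ω]; descending, we
reach n = 0, where u is one of ±1, ±ω, ±ω², ±ω³. -/

lemma rt2_sq : rt2 ^ 2 = 2 := by
  rw [rt2, ← ofReal_pow, Real.sq_sqrt zero_le_two, ofReal_ofNat]

lemma rt2_ne_zero : rt2 ≠ 0 := by
  simp [rt2]

lemma normSq_rt2 : normSq rt2 = 2 := by
  rw [rt2, normSq_ofReal, Real.mul_self_sqrt zero_le_two]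

lemma omg_eq : omg = rt2 / 2 * (1 + I) := by
  rw [omg, show (Real.pi : ℂ) * I / 4 = (Real.pi / 4 : ℝ) * I by push_cast; ring, exp_mul_I,
    ← ofReal_cos, ← ofReal_sin, Real.cos_pi_div_four, Real.sin_pi_div_four, rt2]
  push_cast
  ring

lemma omg_sq : omg ^ 2 = I := by
  rw [omg_eq]
  linear_combination (I / 2) * rt2_sq + (rt2 ^ 2 / 4) * I_sq

lemma omg_pow_four : omg ^ 4 = -1 := by
  rw [show omg ^ 4 = (omg ^ 2) ^ 2 by ring, omg_sq, I_sq]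

lemma rt2_eq : rt2 = omg - omg ^ 3 := by
  rw [pow_succ, omg_sq, omg_eq]
  linear_combination (rt2 / 2) * I_sq

lemma conj_omg : starRingEnd ℂ omg = -omg ^ 3 := by
  rw [pow_succ, omg_sq, omg_eq, map_mul, map_div₀, map_add, conj_I, map_one, map_ofNat, rt2,
    conj_ofReal, ← rt2]
  linear_combination (rt2 / 2) * I_sq

lemma omg_basis_mul (a b c d e f g h : ℂ) :
    (a + b * omg + c * omg ^ 2 + d * omg ^ 3) * (e + f * omg + g * omg ^ 2 + h * omg ^ 3) =
      (a*e - b*h - c*g - d*f) + (a*f + b*e - c*h - d*g) * omg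
        + (a*g + b*f + c*e - d*h) * omg ^ 2 + (a*h + b*g + c*f + d*e) * omg ^ 3 := by
  linear_combination (b*h + c*g + d*f + (c*h + d*g) * omg + d*h * omg ^ 2) * omg_pow_four

def Zomega.subring : Subring ℂ where
  carrier := {z | Zomega z}
  mul_mem' := by
    rintro _ _ ⟨a, b, c, d, rfl⟩ ⟨e, f, g, h, rfl⟩
    exact ⟨a*e - b*h - c*g - d*f, a*f + b*e - c*h - d*g, a*g + b*f + c*e - d*h,
      a*h + b*g + c*f + d*e, by push_cast; exact omg_basis_mul ..⟩
  one_mem' := ⟨1, 0, 0, 0, by simp⟩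
  add_mem' := by
    rintro _ _ ⟨a, b, c, d, rfl⟩ ⟨e, f, g, h, rfl⟩
    exact ⟨a + e, b + f, c + g, d + h, by push_cast; ring⟩
  zero_mem' := ⟨0, 0, 0, 0, by simp⟩
  neg_mem' := by
    rintro _ ⟨a, b, c, d, rfl⟩
    exact ⟨-a, -b, -c, -d, by push_cast; ring⟩

lemma Zomega.rt2_mem_subring : rt2 ∈ Zomega.subring :=
  ⟨0, 1, 0, -1, by rw [rt2_eq]; push_cast; ring⟩

def ZRoot2i.subring : Subring ℂ where
  carrier := {z | ZRoot2i z}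
  mul_mem' := by
    rintro _ _ ⟨u, hu, m, rfl⟩ ⟨v, hv, n, rfl⟩
    exact ⟨u * v, Zomega.subring.mul_mem hu hv, m + n, by rw [pow_add, div_mul_div_comm]⟩
  one_mem' := ⟨1, Zomega.subring.one_mem, 0, by simp⟩
  add_mem' := by
    rintro _ _ ⟨u, hu, m, rfl⟩ ⟨v, hv, n, rfl⟩
    have hrt2 := Zomega.subring.pow_mem Zomega.rt2_mem_subring
    have huv := Zomega.subring.add_mem (Zomega.subring.mul_mem hu (hrt2 n))
      (Zomega.subring.mul_mem hv (hrt2 m))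
    refine ⟨u * rt2 ^ n + v * rt2 ^ m, huv, m + n, ?_⟩
    have := rt2_ne_zero
    rw [pow_add]
    field_simp
  zero_mem' := ⟨0, Zomega.subring.zero_mem, 0, by simp⟩
  neg_mem' := by
    rintro _ ⟨u, hu, n, rfl⟩
    exact ⟨-u, Zomega.subring.neg_mem hu, n, (neg_div _ _).symm⟩

lemma exists_omg_pow_eq_of_sum_sq_eq_one {a b c d : ℤ} (h : a^2 + b^2 + c^2 + d^2 = 1) :
    ∃ k : ℕ, (a + b * omg + c * omg ^ 2 + d * omg ^ 3 : ℂ) = omg ^ k := by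
  have hsmall : ∀ x : ℤ, x ^ 2 ≤ 1 → x = -1 ∨ x = 0 ∨ x = 1 := by
    intro x hx
    rw [sq_le_one_iff_abs_le_one, abs_le] at hx
    omega
  have hneg (j : ℕ) : ∃ k : ℕ, -omg ^ j = omg ^ k :=
    ⟨j + 4, by rw [pow_add, omg_pow_four, mul_neg_one]⟩
  obtain ha | ha | ha := hsmall a (by linarith [sq_nonneg b, sq_nonneg c, sq_nonneg d]) <;>
  obtain hb | hb | hb := hsmall b (by linarith [sq_nonneg a, sq_nonneg c, sq_nonneg d]) <;>
  obtain hc | hc | hc := hsmall c (by linarith [sq_nonneg b, sq_nonneg a, sq_nonneg d]) <;>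
  obtain hd | hd | hd := hsmall d (by linarith [sq_nonneg b, sq_nonneg c, sq_nonneg a]) <;>
  subst ha hb hc hd <;> norm_num at h <;> norm_num <;>
    first
    | exact ⟨0, (pow_zero omg).symm⟩
    | exact ⟨1, (pow_one omg).symm⟩
    | simpa using hneg 0
    | simpa using hneg 1
    | exact hneg 2
    | exact hneg 3

lemma Int.eq_zero_and_eq_of_add_mul_sqrt_two_eq {A s m : ℤ} (h : (A : ℝ) + s * √2 = m) :
    s = 0 ∧ A = m := by
  have hs : s = 0 := by
    by_contra hs
    exact ((irrational_sqrt_two.intCast_mul hs).intCast_add A).ne_int m h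
  subst hs
  exact ⟨rfl, by exact_mod_cast (by simpa using h : (A : ℝ) = m)⟩

lemma normSq_omg_basis (a b c d : ℤ) :
    normSq (a + b * omg + c * omg ^ 2 + d * omg ^ 3) =
      ((a^2 + b^2 + c^2 + d^2 : ℤ) : ℝ) + ((a*b + b*c + c*d - d*a : ℤ) : ℝ) * √2 := by
  apply ofReal_injective
  have hconj : starRingEnd ℂ (a + b * omg + c * omg ^ 2 + d * omg ^ 3) =
      a + (-d : ℤ) * omg + (-c : ℤ) * omg ^ 2 + (-b : ℤ) * omg ^ 3 := by
    simp only [map_add, map_mul, map_pow, conj_omg, map_intCast, Int.cast_neg]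
    linear_combination (c * omg ^ 2 - d * omg ^ 5 + d * omg) * omg_pow_four
  rw [← mul_conj, hconj, omg_basis_mul]
  push_cast
  rw [← rt2, rt2_eq]
  ring

lemma even_add_of_cross_eq_zero {a b c d : ℤ} (h : Even (a^2 + b^2 + c^2 + d^2))
    (hs : a*b + b*c + c*d - d*a = 0) : Even (a + c) ∧ Even (b + d) := by
  have hsum : Even ((a + c) + (b + d)) := by
    simpa [Int.even_add, Int.even_pow, add_assoc, add_left_comm] using h
  have hprod : Even ((a + c) * (b + d)) := ⟨a * d, by linear_combination hs⟩
  rw [Int.even_mul] at hprod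
  rw [Int.even_add] at hsum
  tauto

-- The witness comes from √2 (q + pω + rω² + tω³) = (p - t) + (q + r)ω + (p + t)ω² + (r - q)ω³.
lemma exists_eq_rt2_mul_of_even_add {a b c d : ℤ} (hac : Even (a + c)) (hbd : Even (b + d)) :
    ∃ v, Zomega v ∧ (a + b * omg + c * omg ^ 2 + d * omg ^ 3 : ℂ) = rt2 * v := by
  obtain ⟨p, hp⟩ := hac
  obtain ⟨r, hr⟩ := hbd
  obtain rfl : a = p + p - c := by omega
  obtain rfl : d = r + r - b := by omega
  refine ⟨_, ⟨b - r, p, r, c - p, rfl⟩, ?_⟩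
  rw [rt2_eq]
  push_cast
  linear_combination (p + p - c + r * omg + (c - p) * omg ^ 2) * omg_pow_four

lemma sum_sq_eq_and_cross_eq_zero_of_normSq_eq {a b c d m : ℤ}
    (h : normSq (a + b * omg + c * omg ^ 2 + d * omg ^ 3) = m) :
    a^2 + b^2 + c^2 + d^2 = m ∧ a*b + b*c + c*d - d*a = 0 := by
  rw [normSq_omg_basis] at h
  exact (Int.eq_zero_and_eq_of_add_mul_sqrt_two_eq h).symm

lemma Zomega.exists_eq_rt2_pow_mul_omg_pow (n : ℕ) {u : ℂ} (hu : Zomega u)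
    (h : normSq u = 2 ^ n) : ∃ k : ℕ, u = rt2 ^ n * omg ^ k := by
  obtain ⟨a, b, c, d, rfl⟩ := hu
  obtain ⟨hA, hs⟩ := sum_sq_eq_and_cross_eq_zero_of_normSq_eq (m := 2 ^ n) (by exact_mod_cast h)
  induction n generalizing a b c d with
  | zero => simpa using exists_omg_pow_eq_of_sum_sq_eq_one hA
  | succ n ih =>
    have hA2 : Even (a^2 + b^2 + c^2 + d^2) := hA ▸ (Int.even_pow.mpr ⟨even_two, n.succ_ne_zero⟩)
    obtain ⟨hac, hbd⟩ := even_add_of_cross_eq_zero hA2 hs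
    obtain ⟨v, ⟨a', b', c', d', rfl⟩, huv⟩ := exists_eq_rt2_mul_of_even_add hac hbd
    rw [huv, normSq_mul, normSq_rt2, pow_succ' (2 : ℝ)] at h
    replace h := mul_left_cancel₀ (two_ne_zero' ℝ) h
    obtain ⟨hA', hs'⟩ := sum_sq_eq_and_cross_eq_zero_of_normSq_eq (m := 2 ^ n) (by exact_mod_cast h)
    obtain ⟨k, hk⟩ := ih a' b' c' d' h hA' hs'
    exact ⟨k, by rw [huv, hk]; ring⟩

lemma ZRoot2i.exists_eq_omg_pow {z : ℂ} (hz : ZRoot2i z) (h1 : ‖z‖ = 1) :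
    ∃ k : ℕ, z = omg ^ k := by
  obtain ⟨u, hu, n, rfl⟩ := hz
  have hrt : rt2 ^ n ≠ 0 := pow_ne_zero _ rt2_ne_zero
  have hnu : normSq u = 2 ^ n := by
    rw [norm_div, div_eq_one_iff_eq (norm_ne_zero_iff.mpr hrt)] at h1
    rw [normSq_eq_norm_sq, h1, norm_pow, ← pow_mul, mul_comm, pow_mul, ← normSq_eq_norm_sq,
      normSq_rt2]
  obtain ⟨k, rfl⟩ := hu.exists_eq_rt2_pow_mul_omg_pow n hnu
  exact ⟨k, mul_div_cancel_left₀ _ hrt⟩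

lemma Matrix.eq_of_mem_unitaryGroup_fin_two {R : Type*} [CommRing R] [StarRing R]
    {U : Matrix (Fin 2) (Fin 2) R} (hU : U ∈ Matrix.unitaryGroup (Fin 2) R) :
    U = !![U 0 0, -star (U 1 0) * U.det; U 1 0, star (U 0 0) * U.det] := by
  have hadj : U.adjugate = U.det • star U := by
    rw [← mul_one U.adjugate, ← hU.2, ← mul_assoc, adjugate_mul, smul_mul_assoc, one_mul]
  have h01 : U 0 1 = -star (U 1 0) * U.det := by
    simpa [adjugate_fin_two, mul_comm, neg_eq_iff_eq_neg] using congrFun₂ hadj 0 1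
  have h11 : U 1 1 = star (U 0 0) * U.det := by
    simpa [adjugate_fin_two, mul_comm] using congrFun₂ hadj 0 0
  rw [← h01, ← h11]
  exact eta_fin_two U

open Matrix in
/-- Every 2×2 unitary with entries in Z[1/√2, i] has the form
[[z, −w*ω^k], [w, z*ω^k]] with |z|² + |w|² = 1; in particular its determinant
is a power of ω. -/
theorem stmt19 (U : Matrix (Fin 2) (Fin 2) ℂ)
    (hU : U ∈ Matrix.unitaryGroup (Fin 2) ℂ)
    (hent : ∀ i j, ZRoot2i (U i j)) :
    ∃ (z w : ℂ) (k : ℤ), ZRoot2i z ∧ ZRoot2i w ∧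
      z * (starRingEnd ℂ) z + w * (starRingEnd ℂ) w = 1 ∧
      U = !![z, -(starRingEnd ℂ) w * omg ^ k; w, (starRingEnd ℂ) z * omg ^ k] ∧
      U.det = omg ^ k := by
  have hdet : ZRoot2i U.det := by
    rw [det_fin_two]
    exact ZRoot2i.subring.sub_mem (ZRoot2i.subring.mul_mem (hent 0 0) (hent 1 1))
      (ZRoot2i.subring.mul_mem (hent 0 1) (hent 1 0))
  obtain ⟨k, hk⟩ := hdet.exists_eq_omg_pow (CStarRing.norm_of_mem_unitary (det_of_mem_unitary hU))
  have hcol : star (U 0 0) * U 0 0 + star (U 1 0) * U 1 0 = 1 := by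
    simpa [mul_apply, Fin.sum_univ_two] using congrFun₂ hU.1 0 0
  refine ⟨U 0 0, U 1 0, k, hent 0 0, hent 1 0, ?_, ?_, by rw [hk, zpow_natCast]⟩
  · rw [← star_def]
    linear_combination hcol
  · rw [zpow_natCast, ← hk]
    exact eq_of_mem_unitaryGroup_fin_two hU
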